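/- Revision-sequence independence of the limit (part of Theorem 3): for any control sets C^X, C^Y ⊆ V there exists a state (x*, y*) such that for EVERY revision sequence satisfying Assumption 1, the controlled trajectory satisfies x(t) = x* for all sufficiently large t and y(t) → y* as t → ∞; i.e., the reached equilibrium depends only on the matrices A, W, the parameters λ, β, and the control sets, and not on the revision sequence. -/
import Mathlib


/-- The quantity `δ_i(z)` determining the best-response action. -/
noncomputable def delta (n : ℕ) (A W : Fin n → Fin n → ℝ) (l b : Fin n → ℝ)
    (i : Fin n) (x y : Fin n → ℝ) : ℝ :=
  2 * b i * (1 - l i) * ∑ j, W i j * y j + (1 - b i) * ∑ j, A i j * x j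

/-- Assumption 1 on the revision sequence: there is `T < ∞` such that every
agent activates at least once in every window of `T` consecutive time steps. -/
def RevOK (n : ℕ) (R : ℕ → Finset (Fin n)) : Prop :=
  ∃ T : ℕ, ∀ t : ℕ, ∀ i : Fin n, ∃ s, s < T ∧ i ∈ R (t + s)

/-- The controlled coevolutionary trajectory with control sets `CX, CY`:
controlled coordinates are pinned to `+1` for all `t ≥ 0`, uncontrolled ones
start at `-1` and follow the best-response dynamics when activated. -/
def IsCtrlTraj (n : ℕ) (A W : Fin n → Fin n → ℝ) (l b : Fin n → ℝ)
    (R : ℕ → Finset (Fin n)) (CX CY : Finset (Fin n))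
    (x y : ℕ → Fin n → ℝ) : Prop :=
  (∀ i ∈ CX, ∀ t, x t i = 1) ∧
  (∀ i ∈ CY, ∀ t, y t i = 1) ∧
  (∀ i, i ∉ CX → x 0 i = -1) ∧
  (∀ i, i ∉ CY → y 0 i = -1) ∧
  (∀ t, ∀ i, i ∉ CX →
    x (t + 1) i =
      if i ∈ R t then
        if 0 < delta n A W l b i (x t) (y t) then 1
        else if delta n A W l b i (x t) (y t) < 0 then -1
        else x t i
      else x t i) ∧
  (∀ t, ∀ i, i ∉ CY →
    y (t + 1) i =
      if i ∈ R t then (1 - l i) * (∑ j, W i j * y t j) + l i * x (t + 1) i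
      else y t i)

/-- The trajectory reaches the `+1` consensus (actions) in finite time. -/
def Reaches (n : ℕ) (x : ℕ → Fin n → ℝ) : Prop :=
  ∃ T : ℕ, ∀ t, T ≤ t → ∀ i, x t i = 1

/-! ### Auxiliary material for the proof -/

open Filter

set_option linter.unnecessarySeqFocus false

section Helpers

variable {n : ℕ} {A W : Fin n → Fin n → ℝ} {l b : Fin n → ℝ}
  {R : ℕ → Finset (Fin n)} {CX CY : Finset (Fin n)} {x y : ℕ → Fin n → ℝ}

lemma sum_row_bounds {M : Fin n → Fin n → ℝ} (hM0 : ∀ i j, 0 ≤ M i j)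
    (hMrow : ∀ i, ∑ j, M i j = 1) {v : Fin n → ℝ}
    (hv1 : ∀ j, -1 ≤ v j) (hv2 : ∀ j, v j ≤ 1) (i : Fin n) :
    -1 ≤ ∑ j, M i j * v j ∧ ∑ j, M i j * v j ≤ 1 := by
  constructor
  · calc (-1 : ℝ) = (∑ j, M i j) * (-1) := by rw [hMrow i]; ring
    _ = ∑ j, M i j * (-1) := by rw [Finset.sum_mul]
    _ ≤ _ := Finset.sum_le_sum fun j _ => mul_le_mul_of_nonneg_left (hv1 j) (hM0 i j)
  · calc ∑ j, M i j * v j ≤ ∑ j, M i j * 1 :=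
        Finset.sum_le_sum fun j _ => mul_le_mul_of_nonneg_left (hv2 j) (hM0 i j)
    _ = (∑ j, M i j) * 1 := by rw [Finset.sum_mul]
    _ = 1 := by rw [hMrow i]; ring

lemma delta_mono (hA0 : ∀ i j, 0 ≤ A i j) (hW0 : ∀ i j, 0 ≤ W i j)
    (hl : ∀ i, 0 < l i ∧ l i ≤ 1) (hb : ∀ i, 0 < b i ∧ b i ≤ 1)
    (i : Fin n) {x1 y1 x2 y2 : Fin n → ℝ}
    (hx : ∀ j, x1 j ≤ x2 j) (hy : ∀ j, y1 j ≤ y2 j) :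
    delta n A W l b i x1 y1 ≤ delta n A W l b i x2 y2 := by
  have h1 : ∑ j, W i j * y1 j ≤ ∑ j, W i j * y2 j :=
    Finset.sum_le_sum fun j _ => mul_le_mul_of_nonneg_left (hy j) (hW0 i j)
  have h2 : ∑ j, A i j * x1 j ≤ ∑ j, A i j * x2 j :=
    Finset.sum_le_sum fun j _ => mul_le_mul_of_nonneg_left (hx j) (hA0 i j)
  have c1 : (0:ℝ) ≤ 2 * b i * (1 - l i) := by
    have h3 := (hb i).1; have h4 := (hl i).2; nlinarith
  have c2 : (0:ℝ) ≤ 1 - b i := by have := (hb i).2; linarith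
  unfold delta
  have := mul_le_mul_of_nonneg_left h1 c1
  have := mul_le_mul_of_nonneg_left h2 c2
  linarith

lemma br_mono {d d' c c' : ℝ} (hd : d' ≤ d) (hc : c' ≤ c) (hc1 : -1 ≤ c') (hc2 : c ≤ 1) :
    (if 0 < d' then (1:ℝ) else if d' < 0 then -1 else c') ≤
      (if 0 < d then (1:ℝ) else if d < 0 then -1 else c) := by
  split_ifs <;> linarith

lemma delta_tendsto (i : Fin n) {xk yk : ℕ → Fin n → ℝ} {xl yl : Fin n → ℝ}
    (hx : ∀ j, Tendsto (fun k => xk k j) atTop (nhds (xl j)))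
    (hy : ∀ j, Tendsto (fun k => yk k j) atTop (nhds (yl j))) :
    Tendsto (fun k => delta n A W l b i (xk k) (yk k)) atTop
      (nhds (delta n A W l b i xl yl)) := by
  unfold delta
  exact ((tendsto_finset_sum _ fun j _ => (hy j).const_mul _).const_mul _).add
    ((tendsto_finset_sum _ fun j _ => (hx j).const_mul _).const_mul _)

lemma traj_basic (hW0 : ∀ i j, 0 ≤ W i j) (hWrow : ∀ i, ∑ j, W i j = 1)
    (hl : ∀ i, 0 < l i ∧ l i ≤ 1)
    (h : IsCtrlTraj n A W l b R CX CY x y) :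
    ∀ t i, (x t i = -1 ∨ x t i = 1) ∧ (-1 ≤ y t i ∧ y t i ≤ 1) := by
  obtain ⟨hpx, hpy, h0x, h0y, hux, huy⟩ := h
  intro t
  induction t with
  | zero =>
    intro i
    refine ⟨?_, ?_⟩
    · by_cases hi : i ∈ CX
      · exact Or.inr (hpx i hi 0)
      · exact Or.inl (h0x i hi)
    · by_cases hi : i ∈ CY
      · rw [hpy i hi 0]; norm_num
      · rw [h0y i hi]; norm_num
  | succ t ih =>
    have hx' : ∀ i, x (t+1) i = -1 ∨ x (t+1) i = 1 := by
      intro i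
      by_cases hi : i ∈ CX
      · exact Or.inr (hpx i hi (t+1))
      · rw [hux t i hi]
        split_ifs with h1 h2 h3
        · exact Or.inr rfl
        · exact Or.inl rfl
        · exact (ih i).1
        · exact (ih i).1
    intro i
    refine ⟨hx' i, ?_⟩
    by_cases hi : i ∈ CY
    · rw [hpy i hi (t+1)]; norm_num
    · rw [huy t i hi]
      by_cases hiR : i ∈ R t
      · rw [if_pos hiR]
        have hS := sum_row_bounds hW0 hWrow (fun j => (ih j).2.1) (fun j => (ih j).2.2) i
        have hxb : -1 ≤ x (t+1) i ∧ x (t+1) i ≤ 1 := by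
          rcases hx' i with h' | h' <;> rw [h'] <;> norm_num
        have hl1 := (hl i).1; have hl2 := (hl i).2
        constructor <;> nlinarith [hS.1, hS.2, hxb.1, hxb.2]
      · rw [if_neg hiR]; exact (ih i).2

lemma traj_mono (hA0 : ∀ i j, 0 ≤ A i j) (hW0 : ∀ i j, 0 ≤ W i j)
    (hWrow : ∀ i, ∑ j, W i j = 1)
    (hl : ∀ i, 0 < l i ∧ l i ≤ 1) (hb : ∀ i, 0 < b i ∧ b i ≤ 1)
    (h : IsCtrlTraj n A W l b R CX CY x y) :
    ∀ t, (∀ i, i ∉ CX → x t i = 1 → 0 ≤ delta n A W l b i (x t) (y t)) ∧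
      (∀ i, i ∉ CY → y t i ≤ (1 - l i) * (∑ j, W i j * y t j) + l i * x t i) ∧
      (∀ i, x t i ≤ x (t+1) i ∧ y t i ≤ y (t+1) i) := by
  have hbasic := traj_basic hW0 hWrow hl h
  obtain ⟨hpx, hpy, h0x, h0y, hux, huy⟩ := h
  intro t
  induction t with
  | zero =>
    refine ⟨?_, ?_, ?_⟩
    · intro i hi hx1
      rw [h0x i hi] at hx1; norm_num at hx1
    · intro i hi
      rw [h0y i hi]
      have hS := sum_row_bounds hW0 hWrow (fun j => (hbasic 0 j).2.1)
        (fun j => (hbasic 0 j).2.2) i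
      have hxb : -1 ≤ x 0 i := by
        rcases (hbasic 0 i).1 with h' | h' <;> rw [h'] <;> norm_num
      have hl1 := (hl i).1; have hl2 := (hl i).2
      nlinarith [hS.1]
    · intro i
      constructor
      · by_cases hi : i ∈ CX
        · rw [hpx i hi 0, hpx i hi 1]
        · rw [h0x i hi]
          rcases (hbasic 1 i).1 with h' | h' <;> rw [h'] <;> norm_num
      · by_cases hi : i ∈ CY
        · rw [hpy i hi 0, hpy i hi 1]
        · rw [h0y i hi]; exact (hbasic 1 i).2.1
  | succ t ih =>
    obtain ⟨Jt, Kt, Mt⟩ := ih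
    have hdm : ∀ i, delta n A W l b i (x t) (y t) ≤ delta n A W l b i (x (t+1)) (y (t+1)) :=
      fun i => delta_mono hA0 hW0 hl hb i (fun j => (Mt j).1) (fun j => (Mt j).2)
    have J' : ∀ i, i ∉ CX → x (t+1) i = 1 → 0 ≤ delta n A W l b i (x (t+1)) (y (t+1)) := by
      intro i hi hx1
      refine le_trans ?_ (hdm i)
      rw [hux t i hi] at hx1
      by_cases hiR : i ∈ R t
      · rw [if_pos hiR] at hx1
        split_ifs at hx1 with h1 h2
        · exact le_of_lt h1
        · norm_num at hx1
        · exact Jt i hi hx1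
      · rw [if_neg hiR] at hx1
        exact Jt i hi hx1
    have hSm : ∀ i, ∑ j, W i j * y t j ≤ ∑ j, W i j * y (t+1) j := fun i =>
      Finset.sum_le_sum fun j _ => mul_le_mul_of_nonneg_left ((Mt j).2) (hW0 i j)
    have K' : ∀ i, i ∉ CY →
        y (t+1) i ≤ (1 - l i) * (∑ j, W i j * y (t+1) j) + l i * x (t+1) i := by
      intro i hi
      have hl1 := (hl i).1; have hl2 := (hl i).2
      rw [huy t i hi]
      by_cases hiR : i ∈ R t
      · rw [if_pos hiR]
        have := mul_le_mul_of_nonneg_left (hSm i) (by linarith : (0:ℝ) ≤ 1 - l i)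
        linarith
      · rw [if_neg hiR]
        have h1 := Kt i hi
        have h2 := mul_le_mul_of_nonneg_left (hSm i) (by linarith : (0:ℝ) ≤ 1 - l i)
        have h3 := mul_le_mul_of_nonneg_left ((Mt i).1) (le_of_lt hl1)
        linarith
    have Mx' : ∀ i, x (t+1) i ≤ x (t+2) i := by
      intro i
      by_cases hi : i ∈ CX
      · rw [hpx i hi (t+1), hpx i hi (t+2)]
      · rw [hux (t+1) i hi]
        by_cases hiR : i ∈ R (t+1)
        · rw [if_pos hiR]
          split_ifs with h1 h2
          · rcases (hbasic (t+1) i).1 with h' | h' <;> rw [h'] <;> norm_num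
          · rcases (hbasic (t+1) i).1 with h' | h'
            · rw [h']
            · exfalso; have := J' i hi h'; linarith
          · exact le_refl _
        · rw [if_neg hiR]
    refine ⟨J', K', fun i => ⟨Mx' i, ?_⟩⟩
    by_cases hi : i ∈ CY
    · rw [hpy i hi (t+1), hpy i hi (t+2)]
    · rw [huy (t+1) i hi]
      by_cases hiR : i ∈ R (t+1)
      · rw [if_pos hiR]
        have h1 := K' i hi
        have h2 := mul_le_mul_of_nonneg_left (Mx' i) (le_of_lt (hl i).1)
        linarith
      · rw [if_neg hiR]

lemma traj_time_mono (hA0 : ∀ i j, 0 ≤ A i j) (hW0 : ∀ i j, 0 ≤ W i j)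
    (hWrow : ∀ i, ∑ j, W i j = 1)
    (hl : ∀ i, 0 < l i ∧ l i ≤ 1) (hb : ∀ i, 0 < b i ∧ b i ≤ 1)
    (h : IsCtrlTraj n A W l b R CX CY x y) :
    ∀ s t, s ≤ t → ∀ i, x s i ≤ x t i ∧ y s i ≤ y t i := by
  have hm := traj_mono hA0 hW0 hWrow hl hb h
  intro s t hst
  induction t, hst using Nat.le_induction with
  | base => exact fun i => ⟨le_refl _, le_refl _⟩
  | succ t hst ih =>
    intro i
    exact ⟨le_trans (ih i).1 ((hm t).2.2 i).1, le_trans (ih i).2 ((hm t).2.2 i).2⟩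

end Helpers

/-- The synchronous (all agents revising at every step) controlled iteration. -/
noncomputable def syncZ (n : ℕ) (A W : Fin n → Fin n → ℝ) (l b : Fin n → ℝ)
    (CX CY : Finset (Fin n)) : ℕ → (Fin n → ℝ) × (Fin n → ℝ)
  | 0 => (fun i => if i ∈ CX then 1 else -1, fun i => if i ∈ CY then 1 else -1)
  | (k+1) =>
    let xk := (syncZ n A W l b CX CY k).1
    let yk := (syncZ n A W l b CX CY k).2
    let x' := fun i => if i ∈ CX then 1 else
      if 0 < delta n A W l b i xk yk then 1
      else if delta n A W l b i xk yk < 0 then -1 else xk i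
    (x', fun i => if i ∈ CY then 1
      else (1 - l i) * (∑ j, W i j * yk j) + l i * x' i)

lemma sync_isTraj (n : ℕ) (A W : Fin n → Fin n → ℝ) (l b : Fin n → ℝ)
    (CX CY : Finset (Fin n)) :
    IsCtrlTraj n A W l b (fun _ => Finset.univ) CX CY
      (fun k => (syncZ n A W l b CX CY k).1) (fun k => (syncZ n A W l b CX CY k).2) := by
  refine ⟨?_, ?_, ?_, ?_, ?_, ?_⟩
  · intro i hi t
    induction t with
    | zero => simp [syncZ, hi]
    | succ t _ => simp [syncZ, hi]
  · intro i hi t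
    induction t with
    | zero => simp [syncZ, hi]
    | succ t _ => simp [syncZ, hi]
  · intro i hi; simp [syncZ, hi]
  · intro i hi; simp [syncZ, hi]
  · intro t i hi
    simp only [Finset.mem_univ, if_true]
    show (syncZ n A W l b CX CY (t+1)).1 i = _
    simp only [syncZ, if_neg hi]
  · intro t i hi
    simp only [Finset.mem_univ, if_true]
    show (syncZ n A W l b CX CY (t+1)).2 i = _
    simp only [syncZ, if_neg hi]

open Classical in
/-- The limiting actions of the synchronous iteration. -/
noncomputable def xsD (n : ℕ) (A W : Fin n → Fin n → ℝ) (l b : Fin n → ℝ)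
    (CX CY : Finset (Fin n)) : Fin n → ℝ :=
  fun i => if ∃ k, (syncZ n A W l b CX CY k).1 i = 1 then 1 else -1

/-- The limiting opinions of the synchronous iteration. -/
noncomputable def ysD (n : ℕ) (A W : Fin n → Fin n → ℝ) (l b : Fin n → ℝ)
    (CX CY : Finset (Fin n)) : Fin n → ℝ :=
  fun i => ⨆ k, (syncZ n A W l b CX CY k).2 i

/-- Theorem 3 part, revision-sequence independence of the limit. -/
theorem limit_independent_of_revision_sequence
    (n : ℕ) (A W : Fin n → Fin n → ℝ) (l b : Fin n → ℝ)
    (hA0 : ∀ i j, 0 ≤ A i j) (hA1 : ∀ i j, A i j ≤ 1) (hArow : ∀ i, ∑ j, A i j = 1)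
    (hW0 : ∀ i j, 0 ≤ W i j) (hW1 : ∀ i j, W i j ≤ 1) (hWrow : ∀ i, ∑ j, W i j = 1)
    (hl : ∀ i, 0 < l i ∧ l i ≤ 1) (hb : ∀ i, 0 < b i ∧ b i ≤ 1)
    (CX CY : Finset (Fin n)) :
    ∃ xs ys : Fin n → ℝ,
      (∀ i, xs i = -1 ∨ xs i = 1) ∧ (∀ i, ys i ∈ Set.Icc (-1 : ℝ) 1) ∧
      ∀ (R : ℕ → Finset (Fin n)) (x y : ℕ → Fin n → ℝ),
        RevOK n R → IsCtrlTraj n A W l b R CX CY x y →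
          (∃ T : ℕ, ∀ t, T ≤ t → ∀ i, x t i = xs i) ∧
          (∀ i, Filter.Tendsto (fun t => y t i) Filter.atTop (nhds (ys i))) := by
  classical
  set sx : ℕ → Fin n → ℝ := fun k => (syncZ n A W l b CX CY k).1 with hsx
  set sy : ℕ → Fin n → ℝ := fun k => (syncZ n A W l b CX CY k).2 with hsy
  set xs : Fin n → ℝ := xsD n A W l b CX CY with hxsdef
  set ys : Fin n → ℝ := ysD n A W l b CX CY with hysdef
  have hsT : IsCtrlTraj n A W l b (fun _ => Finset.univ) CX CY sx sy :=
    sync_isTraj n A W l b CX CY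
  have hsb : ∀ k i, (sx k i = -1 ∨ sx k i = 1) ∧ (-1 ≤ sy k i ∧ sy k i ≤ 1) :=
    traj_basic hW0 hWrow hl hsT
  have hsmono : ∀ k i, sx k i ≤ sx (k+1) i ∧ sy k i ≤ sy (k+1) i :=
    fun k => (traj_mono hA0 hW0 hWrow hl hb hsT k).2.2
  have hstm : ∀ s t, s ≤ t → ∀ i, sx s i ≤ sx t i ∧ sy s i ≤ sy t i :=
    traj_time_mono hA0 hW0 hWrow hl hb hsT
  have hpxs : ∀ i ∈ CX, ∀ k, sx k i = 1 := hsT.1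
  have hpys : ∀ i ∈ CY, ∀ k, sy k i = 1 := hsT.2.1
  have h0xs : ∀ i, i ∉ CX → sx 0 i = -1 := hsT.2.2.1
  have h0ys : ∀ i, i ∉ CY → sy 0 i = -1 := hsT.2.2.2.1
  have huxs : ∀ k i, i ∉ CX → sx (k+1) i =
      if 0 < delta n A W l b i (sx k) (sy k) then 1
      else if delta n A W l b i (sx k) (sy k) < 0 then -1
      else sx k i := by
    intro k i hi
    have h := hsT.2.2.2.2.1 k i hi
    simpa using h
  have huys : ∀ k i, i ∉ CY → sy (k+1) i =
      (1 - l i) * (∑ j, W i j * sy k j) + l i * sx (k+1) i := by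
    intro k i hi
    have h := hsT.2.2.2.2.2 k i hi
    simpa using h
  -- xs basic
  have hxs_pm : ∀ i, xs i = -1 ∨ xs i = 1 := by
    intro i
    rw [hxsdef]; unfold xsD
    split_ifs
    · exact Or.inr rfl
    · exact Or.inl rfl
  have hxs_cx : ∀ i ∈ CX, xs i = 1 := by
    intro i hi
    rw [hxsdef]; unfold xsD
    exact if_pos ⟨0, hpxs i hi 0⟩
  -- eventual constancy of sx
  have hxs_ev : ∀ i, ∃ K, ∀ k, K ≤ k → sx k i = xs i := by
    intro i
    by_cases hE : ∃ k, sx k i = 1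
    · obtain ⟨k0, hk0⟩ := hE
      refine ⟨k0, fun k hk => ?_⟩
      have h1 := (hstm k0 k hk i).1
      have h2 : sx k i ≤ 1 := by
        rcases (hsb k i).1 with h' | h' <;> rw [h'] <;> norm_num
      have hxe : xs i = 1 := by
        rw [hxsdef]; unfold xsD; exact if_pos ⟨k0, hk0⟩
      rw [hxe]; rw [hk0] at h1; linarith
    · refine ⟨0, fun k _ => ?_⟩
      have hxe : xs i = -1 := by
        rw [hxsdef]; unfold xsD; exact if_neg hE
      push_neg at hE
      rcases (hsb k i).1 with h' | h'
      · rw [h', hxe]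
      · exact absurd h' (hE k)
  have hsx_tend : ∀ i, Filter.Tendsto (fun k => sx k i) atTop (nhds (xs i)) := by
    intro i
    obtain ⟨K, hK⟩ := hxs_ev i
    refine Filter.Tendsto.congr' ?_ tendsto_const_nhds
    filter_upwards [Filter.eventually_ge_atTop K] with k hk
    exact (hK k hk).symm
  -- ys basic
  have hsy_mono : ∀ i, Monotone fun k => sy k i := fun i =>
    monotone_nat_of_le_succ fun k => (hsmono k i).2
  have hsy_bdd : ∀ i, BddAbove (Set.range fun k => sy k i) := by
    intro i
    refine ⟨1, ?_⟩
    rintro _ ⟨k, rfl⟩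
    exact (hsb k i).2.2
  have hys_eq : ∀ i, ys i = ⨆ k, sy k i := fun i => rfl
  have hsy_tend : ∀ i, Filter.Tendsto (fun k => sy k i) atTop (nhds (ys i)) := by
    intro i
    rw [hys_eq i]
    exact tendsto_atTop_ciSup (hsy_mono i) (hsy_bdd i)
  have hys_mem : ∀ i, ys i ∈ Set.Icc (-1 : ℝ) 1 := by
    intro i
    constructor
    · have h1 : sy 0 i ≤ ys i := by
        rw [hys_eq i]; exact le_ciSup (hsy_bdd i) 0
      have h2 := (hsb 0 i).2.1
      linarith
    · rw [hys_eq i]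
      exact ciSup_le fun k => (hsb k i).2.2
  have hys_cy : ∀ i ∈ CY, ys i = 1 := by
    intro i hi
    rw [hys_eq i]
    have h : ∀ k, sy k i = 1 := fun k => hpys i hi k
    simp [h]
  -- fixed point equation for ys
  have hfix : ∀ i, i ∉ CY → ys i = (1 - l i) * (∑ j, W i j * ys j) + l i * xs i := by
    intro i hi
    have h1 : Filter.Tendsto (fun k => sy (k+1) i) atTop (nhds (ys i)) :=
      (hsy_tend i).comp (Filter.tendsto_add_atTop_nat 1)
    have h3 : Filter.Tendsto
        (fun k => (1 - l i) * (∑ j, W i j * sy k j) + l i * sx (k+1) i) atTop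
        (nhds ((1 - l i) * (∑ j, W i j * ys j) + l i * xs i)) := by
      refine Filter.Tendsto.add ?_ ?_
      · exact (tendsto_finset_sum _ fun j _ => (hsy_tend j).const_mul _).const_mul _
      · exact (((hsx_tend i).comp (Filter.tendsto_add_atTop_nat 1))).const_mul _
    exact tendsto_nhds_unique h1 (h3.congr fun k => (huys k i hi).symm)
  -- delta at limit for non-flipped agents
  have hdel : ∀ i, i ∉ CX → xs i = -1 → delta n A W l b i xs ys ≤ 0 := by
    intro i hi hxm
    have hstep : ∀ k, delta n A W l b i (sx k) (sy k) ≤ 0 := by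
      intro k
      by_contra hpos
      push_neg at hpos
      have h1 : sx (k+1) i = 1 := by
        rw [huxs k i hi, if_pos hpos]
      have h2 : xs i = 1 := by
        rw [hxsdef]; unfold xsD; exact if_pos ⟨k+1, h1⟩
      rw [hxm] at h2; norm_num at h2
    have htd := delta_tendsto (A := A) (W := W) (l := l) (b := b) i hsx_tend hsy_tend
    exact le_of_tendsto' htd hstep
  refine ⟨xs, ys, hxs_pm, hys_mem, ?_⟩
  intro R x y hR hT
  obtain ⟨T, hTs⟩ := hR
  have hbasic := traj_basic hW0 hWrow hl hT
  have hmono := traj_mono hA0 hW0 hWrow hl hb hT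
  have htm := traj_time_mono hA0 hW0 hWrow hl hb hT
  obtain ⟨hpx, hpy, h0x, h0y, hux, huy⟩ := hT
  -- upper bound: x t ≤ xs, y t ≤ ys
  have upper : ∀ t i, x t i ≤ xs i ∧ y t i ≤ ys i := by
    intro t
    induction t with
    | zero =>
      intro i
      constructor
      · by_cases hi : i ∈ CX
        · rw [hpx i hi 0, hxs_cx i hi]
        · rw [h0x i hi]
          rcases hxs_pm i with h' | h' <;> rw [h'] <;> norm_num
      · by_cases hi : i ∈ CY
        · rw [hpy i hi 0, hys_cy i hi]
        · rw [h0y i hi]; exact (hys_mem i).1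
    | succ t ih =>
      have hx' : ∀ i, x (t+1) i ≤ xs i := by
        intro i
        by_cases hi : i ∈ CX
        · rw [hpx i hi (t+1), hxs_cx i hi]
        · rw [hux t i hi]
          by_cases hiR : i ∈ R t
          · rw [if_pos hiR]
            rcases hxs_pm i with hm | hp
            · have hdle : delta n A W l b i (x t) (y t) ≤ 0 :=
                le_trans (delta_mono hA0 hW0 hl hb i (fun j => (ih j).1)
                  (fun j => (ih j).2)) (hdel i hi hm)
              rw [if_neg (not_lt.2 hdle)]
              split_ifs with h2
              · rw [hm]
              · exact (ih i).1
            · rw [hp]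
              split_ifs
              · norm_num
              · norm_num
              · rcases (hbasic t i).1 with h' | h' <;> rw [h'] <;> norm_num
          · rw [if_neg hiR]; exact (ih i).1
      intro i
      refine ⟨hx' i, ?_⟩
      by_cases hi : i ∈ CY
      · rw [hpy i hi (t+1), hys_cy i hi]
      · rw [huy t i hi]
        by_cases hiR : i ∈ R t
        · rw [if_pos hiR, hfix i hi]
          have hS : ∑ j, W i j * y t j ≤ ∑ j, W i j * ys j :=
            Finset.sum_le_sum fun j _ => mul_le_mul_of_nonneg_left ((ih j).2) (hW0 i j)
          have hl1 := (hl i).1; have hl2 := (hl i).2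
          have h1 := mul_le_mul_of_nonneg_left hS (by linarith : (0:ℝ) ≤ 1 - l i)
          have h2 := mul_le_mul_of_nonneg_left (hx' i) (le_of_lt hl1)
          linarith
        · rw [if_neg hiR]; exact (ih i).2
  -- lower bound: sync dominates after k*T steps
  have lower : ∀ k t, k * T ≤ t → ∀ i, sx k i ≤ x t i ∧ sy k i ≤ y t i := by
    intro k
    induction k with
    | zero =>
      intro t _ i
      constructor
      · by_cases hi : i ∈ CX
        · rw [hpxs i hi 0, hpx i hi t]
        · have h2 : x 0 i = -1 := h0x i hi
          have h3 := (htm 0 t (Nat.zero_le t) i).1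
          rw [h0xs i hi]; rw [h2] at h3; exact h3
      · by_cases hi : i ∈ CY
        · rw [hpys i hi 0, hpy i hi t]
        · have h2 : y 0 i = -1 := h0y i hi
          have h3 := (htm 0 t (Nat.zero_le t) i).2
          rw [h0ys i hi]; rw [h2] at h3; exact h3
    | succ k ih =>
      intro t ht i
      obtain ⟨s, hsLT, hsR⟩ := hTs (k * T) i
      have hu1 : k * T + s + 1 ≤ t := by
        have hmul : (k + 1) * T = k * T + T := by ring
        omega
      have ihu := ih (k * T + s) (Nat.le_add_right _ _)
      have hxcomp : sx (k + 1) i ≤ x (k * T + s + 1) i := by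
        by_cases hi : i ∈ CX
        · rw [hpxs i hi (k + 1), hpx i hi _]
        · rw [hux (k * T + s) i hi, if_pos hsR, huxs k i hi]
          have hd := delta_mono hA0 hW0 hl hb i (fun j => (ihu j).1) (fun j => (ihu j).2)
          refine br_mono hd (ihu i).1 ?_ ?_
          · rcases (hsb k i).1 with h' | h' <;> rw [h'] <;> norm_num
          · rcases (hbasic (k * T + s) i).1 with h' | h' <;> rw [h'] <;> norm_num
      constructor
      · exact le_trans hxcomp (htm (k * T + s + 1) t hu1 i).1
      · by_cases hi : i ∈ CY
        · rw [hpys i hi (k + 1), hpy i hi t]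
        · have hstep : sy (k + 1) i ≤ y (k * T + s + 1) i := by
            rw [huy (k * T + s) i hi, if_pos hsR, huys k i hi]
            have hS : ∑ j, W i j * sy k j ≤ ∑ j, W i j * y (k * T + s) j :=
              Finset.sum_le_sum fun j _ =>
                mul_le_mul_of_nonneg_left ((ihu j).2) (hW0 i j)
            have hl1 := (hl i).1; have hl2 := (hl i).2
            have h1 := mul_le_mul_of_nonneg_left hS (by linarith : (0:ℝ) ≤ 1 - l i)
            have h2 := mul_le_mul_of_nonneg_left hxcomp (le_of_lt hl1)
            linarith
          exact le_trans hstep (htm (k * T + s + 1) t hu1 i).2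
  constructor
  · -- eventual equality of actions
    have hall : ∀ᶠ k in atTop, ∀ i, sx k i = xs i :=
      Filter.eventually_all.2 fun i => Filter.eventually_atTop.2 (hxs_ev i)
    obtain ⟨K, hK⟩ := hall.exists
    refine ⟨K * T, fun t ht i => le_antisymm (upper t i).1 ?_⟩
    have h1 := (lower K t ht i).1
    rw [hK i] at h1; exact h1
  · -- convergence of opinions
    intro i
    have hmono_t : Monotone fun t => y t i :=
      monotone_nat_of_le_succ fun t => ((hmono t).2.2 i).2
    have hbdd : BddAbove (Set.range fun t => y t i) := by
      refine ⟨1, ?_⟩; rintro _ ⟨t, rfl⟩; exact (hbasic t i).2.2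
    have h1 := tendsto_atTop_ciSup hmono_t hbdd
    have h2 : (⨆ t, y t i) = ys i := by
      apply le_antisymm
      · exact ciSup_le fun t => (upper t i).2
      · rw [hys_eq i]
        exact ciSup_le fun k =>
          le_trans (lower k (k * T) le_rfl i).2 (le_ciSup hbdd (k * T))
    rwa [h2] at h1
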